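/- arXiv:2106.07298 — 3 statements merged into one kernel-verified Lean document; each statement's English description precedes it below -/
import Mathlib

section
/- There exists a constant C_k > 0 (depending only on k) such that for every irrational x ∈ (0,1): the k-Brjuno series Σ_{n≥0}(β_{n-1}(x))^k log(1/Gⁿ(x)) converges if and only if Σ_{n≥0} (log q_{n+1}(x))/(q_n(x))^k converges, and when both converge their difference is bounded in absolute value by C_k. -/
open Finset Filter

noncomputable def gaussMap (x : ℝ) : ℝ := Int.fract (1 / x)

/-- `betaP x n` is β_{n-1}(x) = ∏_{i=0}^{n-1} Gⁱ(x), with `betaP x 0 = 1`. -/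
noncomputable def betaP (x : ℝ) (n : ℕ) : ℝ := ∏ i ∈ Finset.range n, gaussMap^[i] x

/-- the (n+1)-st partial quotient a_{n+1} = ⌊1/Gⁿ(x)⌋ of the regular continued fraction. -/
noncomputable def cfDigit (x : ℝ) (n : ℕ) : ℤ := ⌊1 / gaussMap^[n] x⌋

/-- `convAux x n = ((pₙ, qₙ), (pₙ₋₁, qₙ₋₁))`, the convergents of the regular continued
fraction of `x`, with `p₋₁ = 1, q₋₁ = 0, p₀ = 0, q₀ = 1`. -/
noncomputable def convAux (x : ℝ) : ℕ → (ℤ × ℤ) × (ℤ × ℤ)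
  | 0 => ((0, 1), (1, 0))
  | n + 1 =>
      ((cfDigit x n * (convAux x n).1.1 + (convAux x n).2.1,
        cfDigit x n * (convAux x n).1.2 + (convAux x n).2.2),
       (convAux x n).1)

/-- numerator pₙ of the n-th principal convergent of `x`. -/
noncomputable def pConv (x : ℝ) (n : ℕ) : ℤ := (convAux x n).1.1

/-- denominator qₙ of the n-th principal convergent of `x`. -/
noncomputable def qConv (x : ℝ) (n : ℕ) : ℤ := (convAux x n).1.2


/-!
Write `Rₙ = qₙ + qₙ₋₁ Gⁿ(x)`. The recursion of the convergents gives `Gⁿ(x) Rₙ₊₁ = Rₙ`, hence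
`β_{n-1}(x) = 1 / Rₙ` and `log (1 / Gⁿ(x)) = log Rₙ₊₁ - log Rₙ`. Since `qₙ ≤ Rₙ ≤ 2 qₙ` and
`qₙ₊₁ ≤ 2 qₙ / Gⁿ(x)`, the `n`-th terms of the two series differ by `O((k + log qₙ) / qₙ ^ k)`,
which is `O(k / √qₙ)`. As `qₙ ≥ (√2)ⁿ / 2`, these differences are dominated by a geometric
series that does not depend on `x`.
-/

open Real

section GaussMap

lemma irrational_gaussMap {y : ℝ} (hy : Irrational y) : Irrational (gaussMap y) := by
  simpa only [gaussMap, Int.fract, one_div] using hy.inv.sub_intCast ⌊y⁻¹⌋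

lemma gaussMap_mem_Ioo {y : ℝ} (hy : Irrational y) : gaussMap y ∈ Set.Ioo 0 1 :=
  ⟨(Int.fract_nonneg _).lt_of_ne' (irrational_gaussMap hy).ne_zero, Int.fract_lt_one _⟩

lemma irrational_gaussMap_iterate {x : ℝ} (hx : Irrational x) (n : ℕ) :
    Irrational (gaussMap^[n] x) := by
  induction n with
  | zero => exact hx
  | succ n ih => rw [Function.iterate_succ_apply']; exact irrational_gaussMap ih

lemma gaussMap_iterate_mem_Ioo {x : ℝ} (hx : Irrational x) (hx01 : x ∈ Set.Ioo 0 1) :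
    ∀ n, gaussMap^[n] x ∈ Set.Ioo 0 1
  | 0 => hx01
  | n + 1 => by
    rw [Function.iterate_succ_apply']
    exact gaussMap_mem_Ioo (irrational_gaussMap_iterate hx n)

lemma one_div_gaussMap_iterate (x : ℝ) (n : ℕ) :
    1 / gaussMap^[n] x = cfDigit x n + gaussMap^[n + 1] x := by
  rw [Function.iterate_succ_apply', gaussMap, cfDigit, Int.floor_add_fract]

lemma one_le_cfDigit {x : ℝ} (hx : Irrational x) (hx01 : x ∈ Set.Ioo 0 1) (n : ℕ) :
    1 ≤ cfDigit x n := by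
  obtain ⟨hpos, hlt⟩ := gaussMap_iterate_mem_Ioo hx hx01 n
  exact Int.le_floor.mpr (by simpa using one_le_one_div hpos hlt.le)

end GaussMap

/-- `qPrev x n` is `qₙ₋₁`, with `q₋₁ = 0`. -/
noncomputable def qPrev (x : ℝ) (n : ℕ) : ℤ := (convAux x n).2.2

section Denominators

variable {x : ℝ}

lemma qConv_zero : qConv x 0 = 1 := rfl

lemma qPrev_zero : qPrev x 0 = 0 := rfl

lemma qPrev_succ (n : ℕ) : qPrev x (n + 1) = qConv x n := rfl

lemma qConv_succ (n : ℕ) : qConv x (n + 1) = cfDigit x n * qConv x n + qPrev x n := rfl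

lemma one_le_qConv (ha : ∀ n, 1 ≤ cfDigit x n) (n : ℕ) : 1 ≤ qConv x n := by
  induction n using Nat.twoStepInduction with
  | zero => exact le_rfl
  | one => simpa [qConv_succ, qConv_zero, qPrev_zero] using ha 0
  | more n h₀ h₁ =>
    rw [qConv_succ, qPrev_succ]
    nlinarith [ha (n + 1)]

lemma qPrev_nonneg (ha : ∀ n, 1 ≤ cfDigit x n) : ∀ n, 0 ≤ qPrev x n
  | 0 => le_rfl
  | n + 1 => zero_le_one.trans (one_le_qConv ha n)

lemma qConv_le_qConv_succ (ha : ∀ n, 1 ≤ cfDigit x n) (n : ℕ) : qConv x n ≤ qConv x (n + 1) := by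
  rw [qConv_succ]
  nlinarith [ha n, one_le_qConv ha n, qPrev_nonneg ha n]

lemma qPrev_le_qConv (ha : ∀ n, 1 ≤ cfDigit x n) : ∀ n, qPrev x n ≤ qConv x n
  | 0 => zero_le_one
  | n + 1 => qConv_le_qConv_succ ha n

lemma sqrt_two_pow_le_two_mul_qConv (ha : ∀ n, 1 ≤ cfDigit x n) (n : ℕ) :
    √2 ^ n ≤ 2 * (qConv x n : ℝ) := by
  induction n using Nat.twoStepInduction with
  | zero => norm_num [qConv_zero]
  | one =>
    have hq : (1 : ℝ) ≤ qConv x 1 := by exact_mod_cast one_le_qConv ha 1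
    have hsqrt : √2 ≤ 2 := by rw [sqrt_le_left zero_le_two]; norm_num
    linarith [pow_one √2]
  | more n h₀ _ =>
    have hdouble : 2 * (qConv x n : ℝ) ≤ qConv x (n + 2) := by
      have hq : qConv x (n + 2) = cfDigit x (n + 1) * qConv x (n + 1) + qConv x n := rfl
      have : 2 * qConv x n ≤ qConv x (n + 2) := by
        nlinarith [ha (n + 1), one_le_qConv ha n, qConv_le_qConv_succ ha n]
      exact_mod_cast this
    calc √2 ^ (n + 2) = 2 * √2 ^ n := by rw [pow_add, sq_sqrt zero_le_two]; ring
      _ ≤ 2 * (2 * (qConv x n : ℝ)) := by gcongr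
      _ ≤ 2 * (qConv x (n + 2) : ℝ) := by gcongr

lemma one_div_sqrt_qConv_le (ha : ∀ n, 1 ≤ cfDigit x n) (n : ℕ) :
    1 / √(qConv x n : ℝ) ≤ √2 * (√√2)⁻¹ ^ n := by
  have hq₁ : (1 : ℝ) ≤ qConv x n := by exact_mod_cast one_le_qConv ha n
  have hq : 0 < √(qConv x n : ℝ) := sqrt_pos.mpr (by linarith)
  have hgrowth : √√2 ^ n ≤ √2 * √(qConv x n : ℝ) := by
    rw [← sqrt_mul zero_le_two, le_sqrt (by positivity) (by linarith), ← pow_mul, mul_comm,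
      pow_mul, sq_sqrt (sqrt_nonneg 2)]
    exact sqrt_two_pow_le_two_mul_qConv ha n
  rw [inv_pow, ← div_eq_mul_inv, div_le_div_iff₀ hq (by positivity)]
  linarith

/-- `fullDen x n` is `Rₙ = qₙ + qₙ₋₁ Gⁿ(x)`. -/
noncomputable def fullDen (x : ℝ) (n : ℕ) : ℝ := qConv x n + qPrev x n * gaussMap^[n] x

lemma gaussMap_iterate_mul_fullDen_succ {n : ℕ} (hX : gaussMap^[n] x ≠ 0) :
    gaussMap^[n] x * fullDen x (n + 1) = fullDen x n := by
  have hinv : gaussMap^[n] x * (cfDigit x n + gaussMap^[n + 1] x) = 1 := by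
    rw [← one_div_gaussMap_iterate, mul_one_div_cancel hX]
  rw [fullDen, fullDen, qConv_succ, qPrev_succ]
  push_cast
  linear_combination (qConv x n : ℝ) * hinv

lemma betaP_mul_fullDen (hx : Irrational x) (n : ℕ) : betaP x n * fullDen x n = 1 := by
  induction n with
  | zero => simp [betaP, fullDen, qConv_zero, qPrev_zero]
  | succ n ih =>
    rw [betaP, Finset.prod_range_succ, ← betaP, mul_assoc,
      gaussMap_iterate_mul_fullDen_succ (irrational_gaussMap_iterate hx n).ne_zero, ih]

end Denominators

section Estimates

lemma log_sub_log_mem_Icc {a b : ℝ} (ha : 0 < a) (hab : a ≤ b) (hb : b ≤ 2 * a) :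
    log b - log a ∈ Set.Icc 0 (log 2) := by
  rw [← log_div (ha.trans_le hab).ne' ha.ne']
  exact ⟨log_nonneg ((one_le_div ha).mpr hab),
    log_le_log (div_pos (ha.trans_le hab) ha) ((div_le_iff₀ ha).mpr hb)⟩

lemma mul_log_two_div_le_two {X : ℝ} (hX0 : 0 < X) (hX1 : X ≤ 1) : X * log (2 / X) ≤ 2 := by
  have hlog2 : log 2 < 1 := log_two_lt_d9.trans (by norm_num)
  have hXlogX : |log X * X| < 1 := abs_log_mul_self_lt X hX0 hX1
  rw [log_div two_ne_zero hX0.ne', mul_sub]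
  nlinarith [neg_abs_le (log X * X), log_nonneg one_le_two]

lemma one_div_pow_sub_one_div_pow_le {Q R X : ℝ} (hQ : 0 < Q) (hQR : Q ≤ R)
    (hRQ : R - Q ≤ X * R) (k : ℕ) : (1 / Q) ^ k - (1 / R) ^ k ≤ k * X * (1 / Q) ^ k := by
  have hR : 0 < R := hQ.trans_le hQR
  have hratio : -X ≤ Q / R - 1 := by
    rw [div_sub_one hR.ne', le_div_iff₀ hR]; linarith
  -- Bernoulli's inequality for `(Q / R) ^ k = (1 + (Q / R - 1)) ^ k`
  have hbernoulli : 1 - k * X ≤ (Q / R) ^ k := by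
    have := one_add_mul_le_pow (a := Q / R - 1) (by linarith [div_nonneg hQ.le hR.le]) k
    rw [add_sub_cancel] at this
    nlinarith [(Nat.cast_nonneg k : (0 : ℝ) ≤ k)]
  have hsplit : (1 / R) ^ k = (1 / Q) ^ k * (Q / R) ^ k := by
    rw [← mul_pow]; congr 1; field_simp
  rw [hsplit]
  nlinarith [pow_pos (one_div_pos.mpr hQ) k]

lemma abs_one_div_pow_mul_log_sub_le {k : ℕ} {X Q Q' R R' : ℝ} (hX0 : 0 < X) (hX1 : X ≤ 1)
    (hQ : 1 ≤ Q) (hQQ' : Q ≤ Q') (hQR : Q ≤ R) (hRQ : R ≤ 2 * Q) (hRQX : R - Q ≤ X * R)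
    (hQ'R' : Q' ≤ R') (hR'Q' : R' ≤ 2 * Q') (hXQ' : X * Q' ≤ 2 * Q) (hXR' : X * R' = R) :
    |(1 / R) ^ k * log (1 / X) - log Q' / Q ^ k| ≤ (2 * k + 1 + log Q) / Q ^ k := by
  have hQ0 : 0 < Q := one_pos.trans_le hQ
  have hR0 : 0 < R := hQ0.trans_le hQR
  have hQ'0 : 0 < Q' := hQ0.trans_le hQQ'
  have hR'0 : 0 < R' := hQ'0.trans_le hQ'R'
  set b := (1 / Q) ^ k
  have hb : 0 ≤ b := by positivity
  have hpow : (1 / R) ^ k ≤ b :=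
    pow_le_pow_left₀ (by positivity) (one_div_le_one_div_of_le hQ0 hQR) k
  -- `log (1 / X) = log R' - log R` splits the difference into three terms
  have hsplit : (1 / R) ^ k * log (1 / X) - log Q' / Q ^ k =
      (1 / R) ^ k * ((log R' - log Q') - (log R - log Q))
        - (b - (1 / R) ^ k) * (log Q' - log Q) - b * log Q := by
    have hlogX : log (1 / X) = log R' - log R := by
      rw [← log_div hR'0.ne' hR0.ne', ← hXR']; congr 1; field_simp
    rw [hlogX, div_eq_mul_one_div (log Q'), ← one_div_pow]; ring
  have hfirst : |(1 / R) ^ k * ((log R' - log Q') - (log R - log Q))| ≤ b := by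
    obtain ⟨hδ₀, hδ₁⟩ := log_sub_log_mem_Icc hQ0 hQR hRQ
    obtain ⟨hδ'₀, hδ'₁⟩ := log_sub_log_mem_Icc hQ'0 hQ'R' hR'Q'
    have hlog2 : log 2 ≤ 1 := (log_two_lt_d9.trans (by norm_num)).le
    rw [abs_mul, abs_of_nonneg (by positivity)]
    calc (1 / R) ^ k * |(log R' - log Q') - (log R - log Q)| ≤ b * 1 :=
          mul_le_mul hpow (abs_le.mpr ⟨by linarith, by linarith⟩) (abs_nonneg _) hb
      _ = b := mul_one b
  have hsecond : 0 ≤ (b - (1 / R) ^ k) * (log Q' - log Q) ∧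
      (b - (1 / R) ^ k) * (log Q' - log Q) ≤ 2 * k * b := by
    have hgap₀ : 0 ≤ b - (1 / R) ^ k := sub_nonneg.mpr hpow
    have hgap₁ := one_div_pow_sub_one_div_pow_le hQ0 hQR hRQX k
    have hL₀ : 0 ≤ log Q' - log Q := sub_nonneg.mpr (log_le_log hQ0 hQQ')
    have hL₁ : log Q' - log Q ≤ log (2 / X) := by
      rw [← log_div hQ'0.ne' hQ0.ne']
      exact log_le_log (div_pos hQ'0 hQ0) (by rw [div_le_div_iff₀ hQ0 hX0]; linarith)
    have hXlog := mul_log_two_div_le_two hX0 hX1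
    refine ⟨mul_nonneg hgap₀ hL₀, ?_⟩
    calc (b - (1 / R) ^ k) * (log Q' - log Q) ≤ (k * X * b) * log (2 / X) :=
          mul_le_mul hgap₁ hL₁ hL₀ (by positivity)
      _ = k * b * (X * log (2 / X)) := by ring
      _ ≤ k * b * 2 := by gcongr
      _ = 2 * k * b := by ring
  have hthird : 0 ≤ b * log Q := mul_nonneg hb (log_nonneg hQ)
  rw [hsplit, div_eq_mul_one_div _ (Q ^ k), ← one_div_pow, mul_comm, abs_le]
  constructor <;> linarith [abs_le.mp hfirst]

lemma add_log_div_pow_le_div_sqrt {k : ℕ} (hk : 1 ≤ k) {c Q : ℝ} (hc : 0 ≤ c) (hQ : 1 ≤ Q) :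
    (c + log Q) / Q ^ k ≤ (c + 2) / √Q := by
  have hQ0 : 0 < Q := one_pos.trans_le hQ
  have hs : 1 ≤ √Q := one_le_sqrt.mpr hQ
  have hss : √Q * √Q = Q := mul_self_sqrt hQ0.le
  have hlog : log Q ≤ 2 * √Q := by
    have := log_le_sub_one_of_pos (sqrt_pos.mpr hQ0)
    rw [log_sqrt hQ0.le] at this
    linarith
  have hQk : Q ≤ Q ^ k := le_self_pow₀ hQ (by omega)
  rw [div_le_div_iff₀ (by positivity) (by positivity)]
  nlinarith [log_nonneg hQ, mul_le_mul_of_nonneg_left hs hc]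

end Estimates

lemma abs_kBrjuno_term_sub_le {k : ℕ} (hk : 1 ≤ k) {x : ℝ} (hx : Irrational x)
    (hx01 : x ∈ Set.Ioo 0 1) (n : ℕ) :
    |betaP x n ^ k * log (1 / gaussMap^[n] x) - log (qConv x (n + 1)) / (qConv x n : ℝ) ^ k|
      ≤ (2 * k + 3) / √(qConv x n : ℝ) := by
  have ha := one_le_cfDigit hx hx01
  obtain ⟨hX0, hX1⟩ := gaussMap_iterate_mem_Ioo hx hx01 n
  obtain ⟨hX'0, hX'1⟩ := gaussMap_iterate_mem_Ioo hx hx01 (n + 1)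
  have hQ : (1 : ℝ) ≤ qConv x n := by exact_mod_cast one_le_qConv ha n
  have hQQ' : (qConv x n : ℝ) ≤ qConv x (n + 1) := by exact_mod_cast qConv_le_qConv_succ ha n
  have hP0 : (0 : ℝ) ≤ qPrev x n := by exact_mod_cast qPrev_nonneg ha n
  have hPQ : (qPrev x n : ℝ) ≤ qConv x n := by exact_mod_cast qPrev_le_qConv ha n
  have hQ' : (qConv x (n + 1) : ℝ) = cfDigit x n * qConv x n + qPrev x n := by
    rw [qConv_succ]; push_cast; rfl
  have haX : (cfDigit x n : ℝ) * gaussMap^[n] x ≤ 1 :=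
    (le_div_iff₀ hX0).mp (Int.floor_le (1 / gaussMap^[n] x))
  have hPX : (qPrev x n : ℝ) * gaussMap^[n] x ≤ qPrev x n :=
    mul_le_of_le_one_right hP0 hX1.le
  have hQX' : (qConv x n : ℝ) * gaussMap^[n + 1] x ≤ qConv x n :=
    mul_le_of_le_one_right (by linarith) hX'1.le
  have hmul := gaussMap_iterate_mul_fullDen_succ hX0.ne'
  rw [eq_one_div_of_mul_eq_one_left (betaP_mul_fullDen hx n)]
  simp only [fullDen, qPrev_succ] at hmul ⊢
  refine (abs_one_div_pow_mul_log_sub_le hX0 hX1.le hQ hQQ' ?_ ?_ ?_ ?_ ?_ ?_ hmul).trans ?_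
  · exact le_add_of_nonneg_right (mul_nonneg hP0 hX0.le)
  · linarith
  · nlinarith [mul_le_mul_of_nonneg_left hPQ hX0.le, mul_nonneg hX0.le (mul_nonneg hP0 hX0.le)]
  · exact le_add_of_nonneg_right (mul_nonneg (by linarith) hX'0.le)
  · linarith
  · rw [hQ']
    nlinarith [mul_le_mul_of_nonneg_right haX (zero_le_one.trans hQ)]
  · exact (add_log_div_pow_le_div_sqrt (c := 2 * k + 1) hk (by positivity) hQ).trans_eq
      (by ring)

theorem kBrjuno_comparison (k : ℕ) (hk : 1 ≤ k) :
    ∃ C : ℝ, 0 < C ∧ ∀ x : ℝ, Irrational x → 0 < x → x < 1 →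
      (Summable (fun n => (betaP x n) ^ k * Real.log (1 / gaussMap^[n] x)) ↔
        Summable (fun n => Real.log (qConv x (n + 1) : ℝ) / (qConv x n : ℝ) ^ k)) ∧
      (Summable (fun n => (betaP x n) ^ k * Real.log (1 / gaussMap^[n] x)) →
        |(∑' n, (betaP x n) ^ k * Real.log (1 / gaussMap^[n] x))
          - ∑' n, Real.log (qConv x (n + 1) : ℝ) / (qConv x n : ℝ) ^ k| ≤ C) := by
  have hr : (√√2)⁻¹ < 1 :=
    inv_lt_one_of_one_lt₀ <| (lt_sqrt zero_le_one).mpr <| by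
      rw [one_pow, lt_sqrt zero_le_one]; norm_num
  set e : ℕ → ℝ := fun n => (2 * k + 3) * (√2 * (√√2)⁻¹ ^ n)
  have he : Summable e :=
    ((summable_geometric_of_lt_one (by positivity) hr).mul_left _).mul_left _
  refine ⟨∑' n, e n, he.tsum_pos (fun n => by positivity) 0 (by positivity),
    fun x hx h0 h1 => ?_⟩
  have hdiff (n : ℕ) : ‖betaP x n ^ k * log (1 / gaussMap^[n] x)
      - log (qConv x (n + 1)) / (qConv x n : ℝ) ^ k‖ ≤ e n := by
    refine (abs_kBrjuno_term_sub_le hk hx ⟨h0, h1⟩ n).trans ?_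
    rw [div_eq_mul_one_div]
    exact mul_le_mul_of_nonneg_left
      (one_div_sqrt_qConv_le (one_le_cfDigit hx ⟨h0, h1⟩) n) (by positivity)
  have hsummable := Summable.of_norm_bounded he hdiff
  refine ⟨summable_iff_of_summable_sub hsummable, fun hf => ?_⟩
  rw [← hf.tsum_sub ((summable_iff_of_summable_sub hsummable).mp hf)]
  exact tsum_of_norm_bounded he.hasSum hdiff
end

section
/- There exists an irrational number x ∈ (0,1) that is a Wilton number but not a Brjuno number, i.e. the alternating series Σ_{n≥0}(-1)ⁿ(log q_{n+1}(x))/q_n(x) converges while Σ_{n≥0}(log q_{n+1}(x))/q_n(x) diverges. -/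
/-! Choose the partial quotients adaptively, `aₙ = ⌈exp (qₙ / (n + 1))⌉`. Since
`aₙ qₙ ≤ qₙ₊₁ ≤ (aₙ + 1) qₙ`, this gives `log qₙ₊₁ / qₙ = 1 / (n + 1) + O(log qₙ / qₙ)`, and the
error is summable because `qₙ ≥ 2ⁿ`. Hence the Wilton series differs from the alternating harmonic
series, and the Brjuno series from the harmonic series, by an absolutely convergent series. -/

open Finset Filter

open Topology

/-- `finiteCF a n = [0; a 0, …, a (n - 1)]`. -/
noncomputable def finiteCF : (ℕ → ℕ) → ℕ → ℝ
  | _, 0 => 0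
  | a, n + 1 => 1 / (a 0 + finiteCF (fun i => a (i + 1)) n)

lemma finiteCF_nonneg (a : ℕ → ℕ) (n : ℕ) : 0 ≤ finiteCF a n := by
  induction n generalizing a with
  | zero => exact le_rfl
  | succ n ih => have := ih (fun i => a (i + 1)); simp only [finiteCF]; positivity

lemma dist_one_div_add_le {m s t : ℝ} (hm : 2 ≤ m) (hs : 0 ≤ s) (ht : 0 ≤ t) :
    dist (1 / (m + s)) (1 / (m + t)) ≤ dist s t / 4 := by
  have hprod : 4 ≤ (m + s) * (m + t) := by nlinarith
  have hsub : 1 / (m + s) - 1 / (m + t) = (t - s) / ((m + s) * (m + t)) := by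
    field_simp
    ring
  rw [Real.dist_eq, Real.dist_eq, hsub, abs_div, abs_of_pos (a := (m + s) * (m + t)) (by positivity),
    abs_sub_comm]
  exact div_le_div_of_nonneg_left (abs_nonneg _) (by norm_num) hprod

lemma dist_finiteCF_succ_le {a : ℕ → ℕ} (ha : ∀ n, 2 ≤ a n) (n : ℕ) :
    dist (finiteCF a n) (finiteCF a (n + 1)) ≤ 1 / 2 * (1 / 4) ^ n := by
  induction n generalizing a with
  | zero =>
    have : (2 : ℝ) ≤ a 0 := by exact_mod_cast ha 0
    simp only [finiteCF, add_zero, dist_zero_left, norm_div, norm_one,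
      Real.norm_natCast, pow_zero, mul_one]
    gcongr
  | succ n ih =>
    calc dist (finiteCF a (n + 1)) (finiteCF a (n + 2))
        ≤ dist (finiteCF (fun i => a (i + 1)) n) (finiteCF (fun i => a (i + 1)) (n + 1)) / 4 :=
          dist_one_div_add_le (by exact_mod_cast ha 0) (finiteCF_nonneg _ n)
            (finiteCF_nonneg _ (n + 1))
      _ ≤ 1 / 2 * (1 / 4) ^ (n + 1) := by
          rw [pow_succ, ← mul_assoc, ← div_eq_mul_one_div]
          gcongr
          exact ih fun i => ha (i + 1)

noncomputable def cfValue (a : ℕ → ℕ) : ℝ := limUnder atTop (finiteCF a)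

section cfValue

variable {a : ℕ → ℕ} (ha : ∀ n, 2 ≤ a n)
include ha

lemma tendsto_finiteCF_cfValue : Tendsto (finiteCF a) atTop (𝓝 (cfValue a)) :=
  (cauchySeq_of_le_geometric _ _ (by norm_num) (dist_finiteCF_succ_le ha)).tendsto_limUnder

lemma cfValue_nonneg : 0 ≤ cfValue a :=
  ge_of_tendsto' (tendsto_finiteCF_cfValue ha) (finiteCF_nonneg a)

lemma cfValue_eq_one_div : cfValue a = 1 / (a 0 + cfValue (fun i => a (i + 1))) := by
  have htail := tendsto_finiteCF_cfValue fun i => ha (i + 1)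
  have hpos : (0 : ℝ) < a 0 + cfValue (fun i => a (i + 1)) := by
    have := cfValue_nonneg fun i => ha (i + 1)
    have : (2 : ℝ) ≤ a 0 := by exact_mod_cast ha 0
    linarith
  exact tendsto_nhds_unique ((tendsto_add_atTop_iff_nat 1).2 (tendsto_finiteCF_cfValue ha))
    (tendsto_const_nhds.div (htail.const_add _) hpos.ne')

lemma cfValue_mem_Ioo : cfValue a ∈ Set.Ioo 0 1 := by
  have := cfValue_nonneg fun i => ha (i + 1)
  have : (2 : ℝ) ≤ a 0 := by exact_mod_cast ha 0
  rw [cfValue_eq_one_div ha, Set.mem_Ioo, one_div_pos, div_lt_one (by linarith)]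
  constructor <;> linarith

lemma gaussMap_cfValue : gaussMap (cfValue a) = cfValue (fun i => a (i + 1)) := by
  have htail := cfValue_mem_Ioo fun i => ha (i + 1)
  rw [gaussMap, cfValue_eq_one_div ha, one_div_one_div, Int.fract_natCast_add,
    Int.fract_eq_self.2 ⟨htail.1.le, htail.2⟩]

lemma gaussMap_iterate_cfValue (n : ℕ) :
    gaussMap^[n] (cfValue a) = cfValue (fun i => a (i + n)) := by
  induction n with
  | zero => rfl
  | succ n ih =>
    rw [Function.iterate_succ_apply', ih, gaussMap_cfValue fun i => ha (i + n)]
    simp only [Nat.add_right_comm _ 1 n, Nat.add_assoc]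

lemma cfDigit_cfValue (n : ℕ) : cfDigit (cfValue a) n = a n := by
  have htail := cfValue_mem_Ioo fun i => ha (i + 1 + n)
  rw [cfDigit, gaussMap_iterate_cfValue ha, cfValue_eq_one_div fun i => ha (i + n),
    one_div_one_div, Int.floor_natCast_add, Int.floor_eq_zero_iff.2 ⟨htail.1.le, htail.2⟩,
    zero_add, add_zero]

end cfValue

lemma gaussMap_ratCast (r : ℚ) : gaussMap r = ((Int.fract r⁻¹ : ℚ) : ℝ) := by
  rw [gaussMap, Rat.cast_fract, one_div, Rat.cast_inv]

lemma exists_gaussMap_iterate_ratCast_eq_zero (r : ℚ) (h0 : 0 ≤ r) (h1 : r < 1) :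
    ∃ n, gaussMap^[n] r = 0 := by
  induction hd : r.den using Nat.strong_induction_on generalizing r with
  | _ d ih =>
    rcases h0.eq_or_lt with rfl | hr
    · exact ⟨0, by simp⟩
    have hden : (Int.fract r⁻¹).den < d := by
      rw [Rat.den_intFract, Rat.den_inv_of_ne_zero hr.ne', ← hd]
      have := Rat.num_lt_denom_iff.2 h1
      have := Rat.num_pos.2 hr
      omega
    obtain ⟨n, hn⟩ := ih _ hden _ (Int.fract_nonneg _) (Int.fract_lt_one _) rfl
    exact ⟨n + 1, by rwa [Function.iterate_succ_apply, gaussMap_ratCast]⟩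

lemma irrational_of_gaussMap_iterate_ne_zero {x : ℝ} (h : ∀ n, gaussMap^[n] x ≠ 0) :
    Irrational x := by
  rintro ⟨r, rfl⟩
  obtain ⟨n, hn⟩ := exists_gaussMap_iterate_ratCast_eq_zero (Int.fract r⁻¹) (Int.fract_nonneg _)
    (Int.fract_lt_one _)
  refine h (n + 1) ?_
  rwa [Function.iterate_succ_apply, gaussMap_ratCast]

def cfDen (a : ℕ → ℕ) : ℕ → ℕ
  | 0 => 1
  | 1 => a 0
  | n + 2 => a (n + 1) * cfDen a (n + 1) + cfDen a n

section cfDen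

variable {a : ℕ → ℕ}

lemma mul_cfDen_le_cfDen_succ (a : ℕ → ℕ) : ∀ n, a n * cfDen a n ≤ cfDen a (n + 1)
  | 0 => by simp [cfDen]
  | _ + 1 => Nat.le_add_right _ _

lemma cfDen_le_cfDen_succ (ha : ∀ n, 1 ≤ a n) : ∀ n, cfDen a n ≤ cfDen a (n + 1)
  | 0 => ha 0
  | n + 1 => (Nat.le_mul_of_pos_left _ (ha (n + 1))).trans (Nat.le_add_right _ _)

lemma one_le_cfDen (ha : ∀ n, 1 ≤ a n) (n : ℕ) : 1 ≤ cfDen a n :=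
  monotone_nat_of_le_succ (cfDen_le_cfDen_succ ha) (Nat.zero_le n)

lemma cfDen_succ_le (ha : ∀ n, 1 ≤ a n) : ∀ n, cfDen a (n + 1) ≤ (a n + 1) * cfDen a n
  | 0 => by simp [cfDen]
  | n + 1 => by
    have := cfDen_le_cfDen_succ ha n
    show a (n + 1) * cfDen a (n + 1) + cfDen a n ≤ _
    rw [add_one_mul]
    omega

lemma two_pow_le_cfDen (ha : ∀ n, 2 ≤ a n) : ∀ n, 2 ^ n ≤ cfDen a n
  | 0 => le_rfl
  | n + 1 => by
    rw [pow_succ, mul_comm]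
    exact (Nat.mul_le_mul (ha n) (two_pow_le_cfDen ha n)).trans (mul_cfDen_le_cfDen_succ a n)

end cfDen

lemma qConv_add_two (x : ℝ) (n : ℕ) :
    qConv x (n + 2) = cfDigit x (n + 1) * qConv x (n + 1) + qConv x n := rfl

lemma qConv_cfValue {a : ℕ → ℕ} (ha : ∀ n, 2 ≤ a n) : ∀ n, qConv (cfValue a) n = cfDen a n
  | 0 => rfl
  | 1 => by simp [qConv, convAux, cfDigit_cfValue ha, cfDen]
  | n + 2 => by
    rw [qConv_add_two, qConv_cfValue ha (n + 1), qConv_cfValue ha n, cfDigit_cfValue ha, cfDen]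
    push_cast
    rfl

/-- The recursion carries `(qₙ, qₙ₊₁)`, so that the digit `aₙ = f n qₙ` may depend on `qₙ`,
which is determined by the earlier digits. -/
def adaptedDenPair (f : ℕ → ℕ → ℕ) : ℕ → ℕ × ℕ
  | 0 => (1, f 0 1)
  | n + 1 => ((adaptedDenPair f n).2,
      f (n + 1) (adaptedDenPair f n).2 * (adaptedDenPair f n).2 + (adaptedDenPair f n).1)

def adaptedDigits (f : ℕ → ℕ → ℕ) (n : ℕ) : ℕ := f n (adaptedDenPair f n).1

lemma adaptedDenPair_eq (f : ℕ → ℕ → ℕ) :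
    ∀ n, adaptedDenPair f n = (cfDen (adaptedDigits f) n, cfDen (adaptedDigits f) (n + 1))
  | 0 => rfl
  | n + 1 => by
    have ih := adaptedDenPair_eq f n
    have hd : adaptedDigits f (n + 1) = f (n + 1) (cfDen (adaptedDigits f) (n + 1)) := by
      rw [adaptedDigits, adaptedDenPair, ih]
    simp only [adaptedDenPair, ih, cfDen, hd]

lemma adaptedDigits_eq (f : ℕ → ℕ → ℕ) (n : ℕ) :
    adaptedDigits f n = f n (cfDen (adaptedDigits f) n) := by
  rw [adaptedDigits, adaptedDenPair_eq]

noncomputable def expDigits (c : ℕ → ℝ) : ℕ → ℕ :=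
  adaptedDigits fun n q => ⌈Real.exp (c n * q)⌉₊

lemma log_add_two_le_two_mul_sqrt {x : ℝ} (hx : 0 < x) : Real.log x + 2 ≤ 2 * √x := by
  have := Real.log_le_sub_one_of_pos (Real.sqrt_pos.2 hx)
  rw [Real.log_sqrt hx.le] at this
  linarith

section expDigits

variable (c : ℕ → ℝ)

local notation "q" => cfDen (expDigits c)

lemma expDigits_eq (n : ℕ) : expDigits c n = ⌈Real.exp (c n * q n)⌉₊ :=
  adaptedDigits_eq _ n

lemma one_le_expDigits (n : ℕ) : 1 ≤ expDigits c n := by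
  rw [expDigits_eq, Nat.one_le_ceil_iff]
  exact Real.exp_pos _

variable {c}

lemma cfDen_expDigits_pos (n : ℕ) : (0 : ℝ) < q n := by
  exact_mod_cast one_le_cfDen (one_le_expDigits c) n

lemma add_log_le_log_cfDen_expDigits_succ (n : ℕ) :
    c n * q n + Real.log (q n) ≤ Real.log (q (n + 1)) := by
  have hq := cfDen_expDigits_pos (c := c) n
  have hle : Real.exp (c n * q n) * q n ≤ q (n + 1) := by
    calc Real.exp (c n * q n) * q n ≤ (expDigits c n : ℝ) * q n := by
          gcongr
          rw [expDigits_eq]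
          exact Nat.le_ceil _
      _ ≤ q (n + 1) := by exact_mod_cast mul_cfDen_le_cfDen_succ _ n
  have := Real.log_le_log (by positivity) hle
  rwa [Real.log_mul (Real.exp_pos _).ne' hq.ne', Real.log_exp] at this

lemma log_cfDen_expDigits_succ_div_sub_nonneg (n : ℕ) :
    0 ≤ Real.log (q (n + 1)) / q n - c n := by
  have hq := cfDen_expDigits_pos (c := c) n
  have hlog : 0 ≤ Real.log (q n) :=
    Real.log_nonneg (by exact_mod_cast one_le_cfDen (one_le_expDigits c) n)
  rw [sub_nonneg, le_div_iff₀ hq]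
  linarith [add_log_le_log_cfDen_expDigits_succ (c := c) n]

variable (hc : ∀ n, 0 < c n)
include hc

lemma two_le_expDigits (n : ℕ) : 2 ≤ expDigits c n := by
  have : 1 < Real.exp (c n * q n) :=
    Real.one_lt_exp_iff.2 (mul_pos (hc n) (cfDen_expDigits_pos n))
  rw [expDigits_eq]
  exact Nat.lt_ceil.2 (by exact_mod_cast this)

lemma log_cfDen_expDigits_succ_le (n : ℕ) :
    Real.log (q (n + 1)) ≤ c n * q n + Real.log (q n) + 2 := by
  have hq := cfDen_expDigits_pos (c := c) n
  have hexp : 1 ≤ Real.exp (c n * q n) := Real.one_le_exp (by have := hc n; positivity)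
  have hle : (q (n + 1) : ℝ) ≤ Real.exp 2 * (Real.exp (c n * q n) * q n) := by
    calc (q (n + 1) : ℝ) ≤ (expDigits c n + 1) * q n := by
          exact_mod_cast cfDen_succ_le (one_le_expDigits c) n
      _ ≤ (Real.exp (c n * q n) + 2) * q n := by
          gcongr ?_ * _
          have := Nat.ceil_lt_add_one (Real.exp_pos (c n * q n)).le
          rw [expDigits_eq]
          linarith
      _ ≤ Real.exp 2 * (Real.exp (c n * q n) * q n) := by
          have : (3 : ℝ) ≤ Real.exp 2 := by
            have := Real.add_one_le_exp 2
            linarith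
          rw [← mul_assoc]
          gcongr
          nlinarith
  have := Real.log_le_log (cfDen_expDigits_pos (n + 1)) hle
  rw [Real.log_mul (Real.exp_pos _).ne' (by positivity), Real.log_exp,
    Real.log_mul (Real.exp_pos _).ne' hq.ne', Real.log_exp] at this
  linarith

lemma log_cfDen_expDigits_succ_div_sub_le (n : ℕ) :
    Real.log (q (n + 1)) / q n - c n ≤ 2 * (√2)⁻¹ ^ n := by
  have hq := cfDen_expDigits_pos (c := c) n
  have hpow : (√2) ^ n ≤ √(q n) := by
    rw [Real.le_sqrt (by positivity) hq.le, ← pow_mul, mul_comm, pow_mul,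
      Real.sq_sqrt zero_le_two]
    exact_mod_cast two_pow_le_cfDen (two_le_expDigits hc) n
  calc Real.log (q (n + 1)) / q n - c n ≤ (Real.log (q n) + 2) / q n := by
        rw [sub_le_iff_le_add, div_add' _ _ _ hq.ne', div_le_div_iff_of_pos_right hq]
        linarith [log_cfDen_expDigits_succ_le hc n]
    _ ≤ 2 * √(q n) / (√(q n) * √(q n)) := by
        rw [Real.mul_self_sqrt hq.le]
        gcongr
        exact log_add_two_le_two_mul_sqrt hq
    _ = 2 / √(q n) := by
        field_simp
    _ ≤ 2 * (√2)⁻¹ ^ n := by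
        rw [inv_pow, ← div_eq_mul_inv]
        gcongr

lemma summable_log_cfDen_expDigits_succ_div_sub :
    Summable fun n => Real.log (q (n + 1)) / q n - c n :=
  Summable.of_nonneg_of_le log_cfDen_expDigits_succ_div_sub_nonneg
    (log_cfDen_expDigits_succ_div_sub_le hc)
    ((summable_geometric_of_lt_one (by positivity)
      (inv_lt_one_of_one_lt₀ Real.one_lt_sqrt_two)).mul_left 2)

end expDigits

theorem exists_irrational_summable_log_qConv_div_sub {c : ℕ → ℝ} (hc : ∀ n, 0 < c n) :
    ∃ x : ℝ, Irrational x ∧ 0 < x ∧ x < 1 ∧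
      Summable fun n => Real.log (qConv x (n + 1) : ℝ) / (qConv x n : ℝ) - c n := by
  have ha := two_le_expDigits hc
  refine ⟨cfValue (expDigits c), irrational_of_gaussMap_iterate_ne_zero fun n => ?_,
    (cfValue_mem_Ioo ha).1, (cfValue_mem_Ioo ha).2, ?_⟩
  · rw [gaussMap_iterate_cfValue ha]
    exact (cfValue_mem_Ioo fun i => ha (i + n)).1.ne'
  · simpa only [qConv_cfValue ha, Int.cast_natCast] using
      summable_log_cfDen_expDigits_succ_div_sub hc

theorem exists_wilton_not_brjuno :
    ∃ x : ℝ, Irrational x ∧ 0 < x ∧ x < 1 ∧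
      (∃ L : ℝ, Tendsto (fun N => ∑ n ∈ Finset.range N,
          (-1 : ℝ) ^ n * (Real.log (qConv x (n + 1) : ℝ) / (qConv x n : ℝ)))
        atTop (nhds L)) ∧
      ¬ Summable (fun n => Real.log (qConv x (n + 1) : ℝ) / (qConv x n : ℝ)) := by
  set c : ℕ → ℝ := fun n => 1 / ((n : ℝ) + 1) with hc
  obtain ⟨x, hirr, hpos, hlt, herr⟩ :=
    exists_irrational_summable_log_qConv_div_sub (c := c) fun n => by positivity
  set b := fun n => Real.log (qConv x (n + 1) : ℝ) / (qConv x n : ℝ)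
  replace herr : Summable fun n => b n - c n := herr
  refine ⟨x, hirr, hpos, hlt, ?_, fun hb => ?_⟩
  · obtain ⟨l, hl⟩ := Antitone.tendsto_alternating_series_of_tendsto_zero
      (fun m n hmn => by gcongr) tendsto_one_div_add_atTop_nhds_zero_nat
    have herr' : Summable fun n => (-1 : ℝ) ^ n * (b n - c n) :=
      herr.abs.of_norm_bounded fun n => by simp
    refine ⟨l + ∑' n, (-1 : ℝ) ^ n * (b n - c n), ?_⟩
    convert hl.add herr'.hasSum.tendsto_sum_nat using 1
    ext N
    rw [← sum_add_distrib]
    congr! 1 with n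
    ring
  · have : Summable c := (hb.sub herr).congr fun n => sub_sub_cancel (b n) (c n)
    exact Real.not_summable_one_div_natCast ((summable_nat_add_iff 1).1 (by simpa [hc] using this))
end

section
/- With M = [[3,-1],[1,0]] and N = [[-1,1],[-1,2]] (as 2×2 integer matrices acting by Möbius transformations), one has M·N·M⁻¹ = N, and consequently [[-2,1],[1,0]]·M^{i-1}·[[-1,1],[0,1]]·(M^{i-1}·[[2,-1],[1,0]])⁻¹ = [[1,0],[-1,1]] for every i ≥ 1 (as Möbius transformations, i.e. up to scalar). -/
/-!
`M` commutes with `N`, so every power of `M` does, and conjugating `N` by a power of `M` fixes it.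
Since `[[-1,1],[0,1]] = N·[[2,-1],[1,0]]`, the second product is `[[-2,1],[1,0]]·M^(i-1)·N·(M^(i-1)·[[2,-1],[1,0]])`
times the inverse of its last factor, i.e. `[[-2,1],[1,0]]·N = [[1,0],[-1,1]]`.
-/

open Matrix

theorem Matrix.mul_mul_mul_inv_of_commute {n R : Type*} [Fintype n] [DecidableEq n] [CommRing R]
    {P N : Matrix n n R} (hPN : Commute P N) (X C : Matrix n n R) (hPC : IsUnit (P * C).det) :
    X * P * (N * C) * (P * C)⁻¹ = X * N := by
  calc X * P * (N * C) * (P * C)⁻¹ = X * N * (P * C) * (P * C)⁻¹ := by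
        simp only [mul_assoc, ← mul_assoc P N C, hPN.eq]
    _ = X * N := mul_nonsing_inv_cancel_right _ _ hPC

theorem moebius_matrix_identity :
    (!![3, -1; 1, 0] : Matrix (Fin 2) (Fin 2) ℤ) * !![-1, 1; -1, 2] * (!![3, -1; 1, 0])⁻¹
      = !![-1, 1; -1, 2] ∧
    ∀ i : ℕ, 1 ≤ i → ∃ c : ℤ, (c = 1 ∨ c = -1) ∧
      (!![-2, 1; 1, 0] : Matrix (Fin 2) (Fin 2) ℤ) * (!![3, -1; 1, 0]) ^ (i - 1)
          * !![-1, 1; 0, 1] * ((!![3, -1; 1, 0]) ^ (i - 1) * !![2, -1; 1, 0])⁻¹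
        = c • !![1, 0; -1, 1] := by
  set M : Matrix (Fin 2) (Fin 2) ℤ := !![3, -1; 1, 0]
  set N : Matrix (Fin 2) (Fin 2) ℤ := !![-1, 1; -1, 2]
  set C : Matrix (Fin 2) (Fin 2) ℤ := !![2, -1; 1, 0]
  have hM : IsUnit M.det := by simp [M, det_fin_two_of]
  have hC : IsUnit C.det := by simp [C, det_fin_two_of]
  have hMN : Commute M N := by simp [Commute, SemiconjBy, M, N]
  have hB : (!![-1, 1; 0, 1] : Matrix (Fin 2) (Fin 2) ℤ) = N * C := by simp [N, C]
  refine ⟨by rw [hMN.eq, mul_nonsing_inv_cancel_right _ _ hM], fun i _ ↦ ⟨1, Or.inl rfl, ?_⟩⟩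
  have hPC : IsUnit (M ^ (i - 1) * C).det := by
    rw [det_mul, det_pow]
    exact (hM.pow _).mul hC
  rw [hB, mul_mul_mul_inv_of_commute (hMN.pow_left _) _ _ hPC]
  simp [N]
end
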